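/- Every sign-changing weak solution u ∈ D^{1,2}(ℝⁿ₊) of the half-space Yamabe equation satisfies I(u) ≥ (1/(n-1)) S_n^{n-1}, where I(u) = (1/2)∫_{ℝⁿ₊}|∇u|² − (1/2*)∫_{∂ℝⁿ₊}|u|^{2*}; in fact I(u⁺) ≥ (1/(2(n-1))) S_n^{n-1} and I(u⁻) ≥ (1/(2(n-1))) S_n^{n-1}. -/

import Mathlib

open MeasureTheory Real

/-- The pointwise dot product of the gradients of `u` and `v` on the half-space
`ℝⁿ₊ = ℝ^{n-1} × [0,∞)`, computed as the sum of products of partial derivatives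
along the standard coordinate directions. -/
noncomputable def gradDot (n : ℕ) (u v : EuclideanSpace ℝ (Fin (n-1)) × ℝ → ℝ)
    (p : EuclideanSpace ℝ (Fin (n-1)) × ℝ) : ℝ :=
  (∑ i : Fin (n-1), fderiv ℝ u p (EuclideanSpace.single i 1, (0:ℝ))
      * fderiv ℝ v p (EuclideanSpace.single i 1, (0:ℝ)))
  + fderiv ℝ u p ((0 : EuclideanSpace ℝ (Fin (n-1))), (1:ℝ))
      * fderiv ℝ v p ((0 : EuclideanSpace ℝ (Fin (n-1))), (1:ℝ))

/-- `|∇u|²`. -/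
noncomputable def gradSq (n : ℕ) (u : EuclideanSpace ℝ (Fin (n-1)) × ℝ → ℝ)
    (p : EuclideanSpace ℝ (Fin (n-1)) × ℝ) : ℝ := gradDot n u u p

/-- The (open) upper half-space `{t > 0}` inside `ℝ^{n-1} × ℝ`. -/
def upper (n : ℕ) : Set (EuclideanSpace ℝ (Fin (n-1)) × ℝ) := {p | 0 < p.2}

/-- The squared `D^{1,2}`-norm `‖u‖²_D = ∫_{ℝⁿ₊} |∇u|²`. -/
noncomputable def Dsq (n : ℕ) (u : EuclideanSpace ℝ (Fin (n-1)) × ℝ → ℝ) : ℝ :=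
  ∫ p in upper n, gradSq n u p

/-- The critical trace exponent `2* = 2(n-1)/(n-2)`. -/
noncomputable def twoStar (n : ℕ) : ℝ := 2 * ((n : ℝ) - 1) / ((n : ℝ) - 2)

/-- The boundary integral `∫_{∂ℝⁿ₊} |u|^{2*}`. -/
noncomputable def bdryInt (n : ℕ) (u : EuclideanSpace ℝ (Fin (n-1)) × ℝ → ℝ) : ℝ :=
  ∫ x : EuclideanSpace ℝ (Fin (n-1)), |u (x, 0)| ^ twoStar n

/-- The energy functional `I(u) = (1/2)∫_{ℝⁿ₊}|∇u|² − (1/2*)∫_{∂ℝⁿ₊}|u|^{2*}`. -/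
noncomputable def energy (n : ℕ) (u : EuclideanSpace ℝ (Fin (n-1)) × ℝ → ℝ) : ℝ :=
  (1/2) * Dsq n u - (1 / twoStar n) * bdryInt n u

/-!
Testing the equation with `u`, `u⁺` and `u⁻` puts each of them on the Nehari manifold
`‖v‖²_D = ∫_{∂ℝⁿ₊} |v|^{2*}`, where `I(v) = (1/(2(n-1))) ∫_{∂ℝⁿ₊} |v|^{2*}`. The trace inequality
then reads `S b^{1 - 1/(n-1)} ≤ b` for `b = ∫_{∂ℝⁿ₊} |v|^{2*} > 0`, i.e. `S^{n-1} ≤ b`. Finally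
`I(u) = I(u⁺) + I(u⁻)` because `|u|^{2*} = |u⁺|^{2*} + |u⁻|^{2*}` pointwise.
-/

section PositivePart

variable {E : Type*} [NormedAddCommGroup E] [NormedSpace ℝ E]

theorem fderiv_max_zero_eq_zero_or (u : E → ℝ) (p : E) :
    fderiv ℝ (fun q => max (u q) 0) p = 0
      ∨ fderiv ℝ u p = fderiv ℝ (fun q => max (u q) 0) p := by
  set P : E → ℝ := fun q => max (u q) 0
  by_cases hd : DifferentiableAt ℝ P p
  swap
  · exact Or.inl (fderiv_zero_of_not_differentiableAt hd)
  rcases le_or_gt (u p) 0 with hneg | hpos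
  · have hmin : IsLocalMin P p := Filter.Eventually.of_forall fun q => by
      simp only [P, max_eq_right hneg, le_max_right]
    exact Or.inl hmin.fderiv_eq_zero
  · have hP : ∀ᶠ q in nhds p, 0 < P q :=
      hd.continuousAt.eventually (lt_mem_nhds (lt_max_of_lt_left hpos))
    refine Or.inr (Filter.EventuallyEq.fderiv_eq ?_)
    filter_upwards [hP] with q hq
    have hu : 0 < u q := by simpa [P] using hq
    exact (max_eq_left hu.le).symm

theorem fderiv_max_neg_zero_eq_zero_or (u : E → ℝ) (p : E) :
    fderiv ℝ (fun q => max (-u q) 0) p = 0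
      ∨ fderiv ℝ u p = -fderiv ℝ (fun q => max (-u q) 0) p := by
  rw [← neg_eq_iff_eq_neg, ← fderiv_fun_neg]
  exact fderiv_max_zero_eq_zero_or (fun q => -u q) p

end PositivePart

section Gradient

variable {n : ℕ} {u v : EuclideanSpace ℝ (Fin (n-1)) × ℝ → ℝ}

theorem gradDot_eq_mul_gradSq {p : EuclideanSpace ℝ (Fin (n-1)) × ℝ} (c : ℝ)
    (h : fderiv ℝ v p = 0 ∨ fderiv ℝ u p = c • fderiv ℝ v p) :
    gradDot n u v p = c * gradSq n v p := by
  rcases h with h | h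
  · simp [gradDot, gradSq, h]
  · simp only [gradDot, gradSq, h, smul_apply, smul_eq_mul,
      mul_add, Finset.mul_sum, mul_assoc]

theorem gradDot_max_zero (p : EuclideanSpace ℝ (Fin (n-1)) × ℝ) :
    gradDot n u (fun q => max (u q) 0) p = gradSq n (fun q => max (u q) 0) p := by
  simpa using gradDot_eq_mul_gradSq 1 (by simpa using fderiv_max_zero_eq_zero_or u p)

theorem gradDot_max_neg_zero (p : EuclideanSpace ℝ (Fin (n-1)) × ℝ) :
    gradDot n u (fun q => max (-u q) 0) p = -gradSq n (fun q => max (-u q) 0) p := by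
  simpa using gradDot_eq_mul_gradSq (-1) <|
    (fderiv_max_neg_zero_eq_zero_or u p).imp_right fun h => h.trans (neg_one_smul ℝ _).symm

end Gradient

section Pointwise

variable {e : ℝ}

theorem abs_rpow_mul_mul_max_zero (a : ℝ) (he : e + 2 ≠ 0) :
    |a| ^ e * a * max a 0 = |max a 0| ^ (e + 2) := by
  rcases le_or_gt a 0 with ha | ha
  · simp [max_eq_right ha, Real.zero_rpow he]
  · rw [max_eq_left ha.le, abs_of_pos ha, Real.rpow_add ha, Real.rpow_two]
    ring

theorem abs_rpow_mul_mul_max_neg_zero (a : ℝ) (he : e + 2 ≠ 0) :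
    |a| ^ e * a * max (-a) 0 = -|max (-a) 0| ^ (e + 2) := by
  rw [← abs_rpow_mul_mul_max_zero (-a) he, abs_neg]
  ring

theorem abs_rpow_mul_mul_self (a : ℝ) (he : e + 2 ≠ 0) :
    |a| ^ e * a * a = |a| ^ (e + 2) := by
  have h := abs_rpow_mul_mul_max_zero |a| he
  rw [max_eq_left (abs_nonneg a), abs_abs] at h
  rwa [mul_assoc, ← abs_mul_abs_self a, ← mul_assoc]

theorem abs_rpow_eq_add (a : ℝ) {t : ℝ} (ht : t ≠ 0) :
    |a| ^ t = |max a 0| ^ t + |max (-a) 0| ^ t := by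
  rcases le_total a 0 with ha | ha
  · simp [max_eq_right ha, max_eq_left (neg_nonneg.mpr ha), Real.zero_rpow ht]
  · simp [max_eq_left ha, max_eq_right (neg_nonpos.mpr ha), Real.zero_rpow ht]

end Pointwise

theorem pow_le_of_mul_rpow_le {S b : ℝ} {k : ℕ} (hk : k ≠ 0) (hS : 0 ≤ S) (hb : 0 < b)
    (h : S * b ^ (1 - (k⁻¹ : ℝ)) ≤ b) : S ^ k ≤ b := by
  have hroot : 0 < b ^ (k⁻¹ : ℝ) := Real.rpow_pos_of_pos hb _
  have hS_le : S ≤ b ^ (k⁻¹ : ℝ) := by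
    rw [Real.rpow_sub hb, Real.rpow_one, mul_div_assoc', div_le_iff₀ hroot, mul_comm b] at h
    exact le_of_mul_le_mul_right h hb
  calc S ^ k ≤ (b ^ (k⁻¹ : ℝ)) ^ k := pow_le_pow_left₀ hS hS_le k
    _ = b := Real.rpow_inv_natCast_pow hb.le hk

section Exponent

variable {n : ℕ}

theorem twoStar_eq_add_two (hn : 2 < n) : twoStar n = 2 / ((n : ℝ) - 2) + 2 := by
  have : (n : ℝ) - 2 ≠ 0 := by rw [sub_ne_zero]; exact_mod_cast hn.ne'
  unfold twoStar
  field_simp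
  ring

theorem two_div_twoStar (hn : 2 < n) : 2 / twoStar n = 1 - (((n - 1 : ℕ) : ℝ)⁻¹) := by
  have h2 : (2 : ℝ) < n := by exact_mod_cast hn
  have h1 : (n : ℝ) - 1 ≠ 0 := by linarith
  have h2' : (n : ℝ) - 2 ≠ 0 := by linarith
  rw [Nat.cast_sub (by omega : 1 ≤ n), Nat.cast_one, twoStar]
  field_simp
  ring

theorem twoStar_pos (hn : 2 < n) : 0 < twoStar n := by
  rw [twoStar_eq_add_two hn]
  have h2 : (2 : ℝ) < n := by exact_mod_cast hn
  have : 0 < 2 / ((n : ℝ) - 2) := div_pos two_pos (by linarith)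
  linarith

theorem one_div_two_sub_inv_twoStar (hn : 2 < n) :
    1 / 2 - 1 / twoStar n = 1 / (2 * ((n : ℝ) - 1)) := by
  have h2 : (2 : ℝ) < n := by exact_mod_cast hn
  have h1 : (n : ℝ) - 1 ≠ 0 := by linarith
  have h2' : (n : ℝ) - 2 ≠ 0 := by linarith
  unfold twoStar
  field_simp
  ring

end Exponent

section Nehari

variable {n : ℕ} {u v : EuclideanSpace ℝ (Fin (n-1)) × ℝ → ℝ}

theorem bdryInt_nonneg : 0 ≤ bdryInt n v :=
  integral_nonneg fun _ => Real.rpow_nonneg (abs_nonneg _) _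

theorem Dsq_eq_bdryInt_of_test (c : ℝ) (hc : c ≠ 0)
    (htest : ∫ p in upper n, gradDot n u v p
      = ∫ x : EuclideanSpace ℝ (Fin (n-1)),
          |u (x, 0)| ^ (2 / ((n : ℝ) - 2)) * u (x, 0) * v (x, 0))
    (hgrad : ∀ p, gradDot n u v p = c * gradSq n v p)
    (hbdry : ∀ x, |u (x, 0)| ^ (2 / ((n : ℝ) - 2)) * u (x, 0) * v (x, 0)
      = c * |v (x, 0)| ^ twoStar n) :
    Dsq n v = bdryInt n v := by
  simp only [hgrad, hbdry, integral_const_mul] at htest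
  exact mul_left_cancel₀ hc htest

theorem Dsq_eq_bdryInt_self (hn : 2 < n)
    (htest : ∫ p in upper n, gradDot n u u p
      = ∫ x : EuclideanSpace ℝ (Fin (n-1)),
          |u (x, 0)| ^ (2 / ((n : ℝ) - 2)) * u (x, 0) * u (x, 0)) :
    Dsq n u = bdryInt n u := by
  have he := twoStar_eq_add_two hn ▸ (twoStar_pos hn).ne'
  refine Dsq_eq_bdryInt_of_test 1 one_ne_zero htest (fun p => (one_mul _).symm) fun x => ?_
  rw [one_mul, twoStar_eq_add_two hn]
  exact abs_rpow_mul_mul_self _ he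

theorem Dsq_max_zero_eq_bdryInt (hn : 2 < n)
    (htest : ∫ p in upper n, gradDot n u (fun q => max (u q) 0) p
      = ∫ x : EuclideanSpace ℝ (Fin (n-1)),
          |u (x, 0)| ^ (2 / ((n : ℝ) - 2)) * u (x, 0) * max (u (x, 0)) 0) :
    Dsq n (fun q => max (u q) 0) = bdryInt n (fun q => max (u q) 0) := by
  have he := twoStar_eq_add_two hn ▸ (twoStar_pos hn).ne'
  refine Dsq_eq_bdryInt_of_test 1 one_ne_zero htest
    (fun p => (gradDot_max_zero p).trans (one_mul _).symm) fun x => ?_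
  rw [one_mul, twoStar_eq_add_two hn]
  exact abs_rpow_mul_mul_max_zero _ he

theorem Dsq_max_neg_zero_eq_bdryInt (hn : 2 < n)
    (htest : ∫ p in upper n, gradDot n u (fun q => max (-u q) 0) p
      = ∫ x : EuclideanSpace ℝ (Fin (n-1)),
          |u (x, 0)| ^ (2 / ((n : ℝ) - 2)) * u (x, 0) * max (-u (x, 0)) 0) :
    Dsq n (fun q => max (-u q) 0) = bdryInt n (fun q => max (-u q) 0) := by
  have he := twoStar_eq_add_two hn ▸ (twoStar_pos hn).ne'
  refine Dsq_eq_bdryInt_of_test (-1) (neg_ne_zero.mpr one_ne_zero) htest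
    (fun p => (gradDot_max_neg_zero p).trans (neg_one_mul _).symm) fun x => ?_
  rw [neg_one_mul, twoStar_eq_add_two hn]
  exact abs_rpow_mul_mul_max_neg_zero _ he

theorem energy_eq_of_Dsq_eq_bdryInt (hn : 2 < n) (hD : Dsq n v = bdryInt n v) :
    energy n v = 1 / (2 * ((n : ℝ) - 1)) * bdryInt n v := by
  rw [energy, hD, ← one_div_two_sub_inv_twoStar hn]
  ring

theorem le_energy_of_Dsq_eq_bdryInt (hn : 2 < n) {S : ℝ} (hS : 0 < S)
    (htrace : S * (bdryInt n v) ^ (2 / twoStar n) ≤ Dsq n v)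
    (hD : Dsq n v = bdryInt n v) (hne : Dsq n v ≠ 0) :
    1 / (2 * ((n : ℝ) - 1)) * S ^ (n - 1) ≤ energy n v := by
  have hb : 0 < bdryInt n v := bdryInt_nonneg.lt_of_ne (hD ▸ hne).symm
  have hSb : S ^ (n - 1) ≤ bdryInt n v := by
    refine pow_le_of_mul_rpow_le (by omega) hS.le hb ?_
    rw [← two_div_twoStar hn]
    exact htrace.trans_eq hD
  have hcoef : 0 ≤ 1 / (2 * ((n : ℝ) - 1)) := by
    have : (2 : ℝ) < n := by exact_mod_cast hn
    exact div_nonneg zero_le_one (by linarith)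
  rw [energy_eq_of_Dsq_eq_bdryInt hn hD]
  exact mul_le_mul_of_nonneg_left hSb hcoef

theorem bdryInt_eq_add (hn : 2 < n)
    (hpos : bdryInt n (fun q => max (u q) 0) ≠ 0) (hneg : bdryInt n (fun q => max (-u q) 0) ≠ 0) :
    bdryInt n u = bdryInt n (fun q => max (u q) 0) + bdryInt n (fun q => max (-u q) 0) := by
  unfold bdryInt at *
  rw [← integral_add (Integrable.of_integral_ne_zero hpos) (Integrable.of_integral_ne_zero hneg)]
  exact integral_congr_ae (Filter.Eventually.of_forall fun x =>
    abs_rpow_eq_add _ (twoStar_pos hn).ne')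

theorem energy_eq_add (hn : 2 < n) (hu : Dsq n u = bdryInt n u)
    (hpos : Dsq n (fun q => max (u q) 0) = bdryInt n (fun q => max (u q) 0))
    (hneg : Dsq n (fun q => max (-u q) 0) = bdryInt n (fun q => max (-u q) 0))
    (hpos_ne : Dsq n (fun q => max (u q) 0) ≠ 0) (hneg_ne : Dsq n (fun q => max (-u q) 0) ≠ 0) :
    energy n u = energy n (fun q => max (u q) 0) + energy n (fun q => max (-u q) 0) := by
  rw [energy_eq_of_Dsq_eq_bdryInt hn hu, energy_eq_of_Dsq_eq_bdryInt hn hpos,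
    energy_eq_of_Dsq_eq_bdryInt hn hneg, bdryInt_eq_add hn (hpos ▸ hpos_ne) (hneg ▸ hneg_ne)]
  ring

end Nehari

/-- Every sign-changing weak solution `u ∈ D^{1,2}(ℝⁿ₊)` of the half-space Yamabe
equation satisfies `I(u⁺) ≥ (1/(2(n-1))) S_n^{n-1}`, `I(u⁻) ≥ (1/(2(n-1))) S_n^{n-1}`
and `I(u) ≥ (1/(n-1)) S_n^{n-1}`. -/
theorem sign_changing_energy_bound (n : ℕ) (hn : 3 ≤ n)
    (𝒟 : Set (EuclideanSpace ℝ (Fin (n-1)) × ℝ → ℝ))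
    (u : EuclideanSpace ℝ (Fin (n-1)) × ℝ → ℝ)
    (hu : u ∈ 𝒟) (hup : (fun p => max (u p) 0) ∈ 𝒟)
    (hum : (fun p => max (-u p) 0) ∈ 𝒟)
    -- the sharp Sobolev trace constant
    (S : ℝ) (hS : 0 < S)
    (htrace : ∀ v ∈ 𝒟, S * (bdryInt n v) ^ (2 / twoStar n) ≤ Dsq n v)
    -- weak solution of Δu = 0 in ℝⁿ₊, ∂u/∂ν + |u|^{2/(n-2)}u = 0 on ∂ℝⁿ₊
    (hweak : ∀ φ ∈ 𝒟, ∫ p in upper n, gradDot n u φ p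
      = ∫ x : EuclideanSpace ℝ (Fin (n-1)),
          |u (x, 0)| ^ (2 / ((n : ℝ) - 2)) * u (x, 0) * φ (x, 0))
    -- u is sign-changing: neither u⁺ nor u⁻ is identically zero
    (hnep : Dsq n (fun p => max (u p) 0) ≠ 0)
    (hnem : Dsq n (fun p => max (-u p) 0) ≠ 0) :
    (1 / (2 * ((n : ℝ) - 1))) * S ^ (n - 1) ≤ energy n (fun p => max (u p) 0)
      ∧ (1 / (2 * ((n : ℝ) - 1))) * S ^ (n - 1) ≤ energy n (fun p => max (-u p) 0)
      ∧ (1 / ((n : ℝ) - 1)) * S ^ (n - 1) ≤ energy n u := by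
  have hDu := Dsq_eq_bdryInt_self hn (hweak _ hu)
  have hDp := Dsq_max_zero_eq_bdryInt hn (hweak _ hup)
  have hDm := Dsq_max_neg_zero_eq_bdryInt hn (hweak _ hum)
  have hEp := le_energy_of_Dsq_eq_bdryInt hn hS (htrace _ hup) hDp hnep
  have hEm := le_energy_of_Dsq_eq_bdryInt hn hS (htrace _ hum) hDm hnem
  refine ⟨hEp, hEm, ?_⟩
  have hhalf : 1 / ((n : ℝ) - 1) = 2 * (1 / (2 * ((n : ℝ) - 1))) := by
    rw [mul_one_div, div_mul_cancel_left₀ two_ne_zero, one_div]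
  rw [energy_eq_add hn hDu hDp hDm hnep hnem, hhalf]
  linarith
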